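/- Let a > 0. For every R > 0 there exists a constant M > 0 such that |C_a(u,w)| ≤ M/u for all u ≥ 1 and all complex w with |w| ≤ R. -/

import Mathlib

/-!
For `Re w < 0`, two integrations by parts express `C(u,w)` as `1/(2πu)` times boundary terms
at `t = a` plus a polynomial multiple of `C(u,w-2)/(2πu)`; by the identity theorem this
recursion holds for every `w`. On `Re w ≤ -1` the defining integral is bounded uniformly in
`u`, so repeated use of the recursion bounds `C` uniformly on `|w| ≤ R`, and one more use
supplies the factor `1/u`.
-/

open MeasureTheory Complex Set Real

noncomputable section

/-- `C t` is, for each `t > 0`, the entire extension of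
`w ↦ 2∫_a^∞ cos(2πut) t^(w−1) dt` (defined for `Re(w) < 0`). -/
def IsCaExtension (a : ℝ) (C : ℝ → ℂ → ℂ) : Prop :=
  ∀ u : ℝ, 0 < u → Differentiable ℂ (C u) ∧
    ∀ w : ℂ, w.re < 0 →
      C u w = 2 * ∫ t in Ioi a, (Real.cos (2 * π * u * t) : ℂ) * (t : ℂ) ^ (w - 1)

open Filter Topology

theorem tendsto_ofReal_cpow_atTop_zero {s : ℂ} (hs : s.re < 0) :
    Tendsto (fun t : ℝ => (t : ℂ) ^ s) atTop (𝓝 0) := by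
  rw [tendsto_zero_iff_norm_tendsto_zero]
  refine (neg_neg s.re ▸ tendsto_rpow_neg_atTop (neg_pos.2 hs)).congr' ?_
  filter_upwards [eventually_gt_atTop 0] with t ht
  rw [norm_cpow_eq_rpow_re_of_pos ht]

theorem integral_Ioi_mul_ofReal_cpow_eq {a : ℝ} (ha : 0 < a) {F f : ℝ → ℂ} {K L : ℝ}
    (hF : ∀ t, HasDerivAt F (f t) t) (hFK : ∀ t, ‖F t‖ ≤ K) (hf : Continuous f)
    (hfL : ∀ t, ‖f t‖ ≤ L) {s : ℂ} (hs : s.re < 0) :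
    ∫ t in Ioi a, f t * (t : ℂ) ^ (s - 1) =
      -(F a * (a : ℂ) ^ (s - 1)) - (s - 1) * ∫ t in Ioi a, F t * (t : ℂ) ^ (s - 2) := by
  have hcpow : ∀ t ∈ Ioi a, HasDerivAt (fun t : ℝ => (t : ℂ) ^ (s - 1))
      ((s - 1) * (t : ℂ) ^ (s - 2)) t := by
    intro t ht
    have := ((hasDerivAt_id (t : ℂ)).cpow_const (c := s - 1)
      (Or.inl (by simpa using ha.trans ht))).comp_ofReal
    simpa [show s - 1 - 1 = s - 2 by ring] using this
  have hFint : IntegrableOn (fun t : ℝ => F t * ((s - 1) * (t : ℂ) ^ (s - 2))) (Ioi a) :=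
    ((integrableOn_Ioi_cpow_of_lt (by simp only [sub_re, re_ofNat]; linarith) ha).const_mul
      _).bdd_mul (continuous_iff_continuousAt.2 fun t => (hF t).continuousAt).aestronglyMeasurable
      (ae_of_all _ hFK)
  have hfint : IntegrableOn (fun t : ℝ => f t * (t : ℂ) ^ (s - 1)) (Ioi a) :=
    (integrableOn_Ioi_cpow_of_lt (by simp only [sub_re, one_re]; linarith) ha).bdd_mul
      hf.aestronglyMeasurable (ae_of_all _ hfL)
  have h_zero : Tendsto (fun t : ℝ => F t * (t : ℂ) ^ (s - 1)) (𝓝[>] a)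
      (𝓝 (F a * (a : ℂ) ^ (s - 1))) :=
    ((hF a).continuousAt.mul
      (continuousAt_ofReal_cpow_const a _ (Or.inr ha.ne'))).tendsto.mono_left nhdsWithin_le_nhds
  have h_infty : Tendsto (fun t : ℝ => F t * (t : ℂ) ^ (s - 1)) atTop (𝓝 0) :=
    isBoundedUnder_le_mul_tendsto_zero (isBoundedUnder_of ⟨K, hFK⟩)
      (tendsto_ofReal_cpow_atTop_zero (by simp only [sub_re, one_re]; linarith))
  have := integral_Ioi_mul_deriv_eq_deriv_mul (fun t _ => hF t) hcpow hFint hfint h_zero h_infty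
  simp only [mul_left_comm (F _), integral_const_mul] at this
  linear_combination this

theorem integral_Ioi_cos_mul_cpow_eq {a c : ℝ} (ha : 0 < a) (hc : 0 < c) {w : ℂ} (hw : w.re < 0) :
    ∫ t in Ioi a, (Real.cos (c * t) : ℂ) * (t : ℂ) ^ (w - 1) =
      (c : ℂ)⁻¹ * (-(Real.sin (c * a) * (a : ℂ) ^ (w - 1)) - (c : ℂ)⁻¹ * (w - 1) *
        (Real.cos (c * a) * (a : ℂ) ^ (w - 2) +
          (w - 2) * ∫ t in Ioi a, (Real.cos (c * t) : ℂ) * (t : ℂ) ^ (w - 3))) := by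
  have hc' : (c : ℂ) ≠ 0 := ofReal_ne_zero.2 hc.ne'
  have hlin : ∀ x : ℝ, HasDerivAt (fun t : ℝ => c * t) c x := fun x => by
    simpa using (hasDerivAt_id x).const_mul c
  have hsin : ∀ t : ℝ, HasDerivAt (fun t : ℝ => (Real.sin (c * t) : ℂ) / c)
      (Real.cos (c * t)) t := fun t => by
    simpa [hc'] using ((Real.hasDerivAt_sin _).comp t (hlin t)).ofReal_comp.div_const (c : ℂ)
  have hcos : ∀ t : ℝ, HasDerivAt (fun t : ℝ => -(Real.cos (c * t) : ℂ) / c)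
      (Real.sin (c * t)) t := fun t => by
    simpa [hc'] using ((Real.hasDerivAt_cos _).comp t (hlin t)).ofReal_comp.neg.div_const (c : ℂ)
  have hnorm : ∀ x : ℝ, ‖(Real.sin x : ℂ)‖ ≤ 1 ∧ ‖(Real.cos x : ℂ)‖ ≤ 1 := fun x => by
    simp only [norm_real, Real.norm_eq_abs]; exact ⟨abs_sin_le_one x, abs_cos_le_one x⟩
  have hdiv : ∀ z : ℂ, ‖z‖ ≤ 1 → ‖z / c‖ ≤ c⁻¹ := fun z hz => by
    rw [norm_div, norm_real, Real.norm_of_nonneg hc.le, div_eq_mul_inv]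
    exact mul_le_of_le_one_left (by positivity) hz
  have h1 := integral_Ioi_mul_ofReal_cpow_eq ha hsin (fun t => hdiv _ (hnorm _).1)
    (by fun_prop) (fun t => (hnorm _).2) hw
  have h2 := integral_Ioi_mul_ofReal_cpow_eq ha hcos
    (fun t => hdiv _ (by rw [norm_neg]; exact (hnorm _).2)) (by fun_prop) (fun t => (hnorm _).1)
    (s := w - 1) (by simp only [sub_re, one_re]; linarith)
  simp only [div_eq_inv_mul, neg_mul, mul_assoc, integral_const_mul, integral_neg] at h1 h2
  rw [show w - 1 - 1 = w - 2 by ring, show w - 1 - 2 = w - 3 by ring] at h2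
  rw [h1, h2]
  ring

theorem IsCaExtension.apply_eq_recurrence {a : ℝ} {C : ℝ → ℂ → ℂ} (hC : IsCaExtension a C)
    (ha : 0 < a) {u : ℝ} (hu : 0 < u) (w : ℂ) :
    C u w = ((2 * π * u : ℝ) : ℂ)⁻¹ * (-(2 * Real.sin (2 * π * u * a) * (a : ℂ) ^ (w - 1)) -
      ((2 * π * u : ℝ) : ℂ)⁻¹ * (w - 1) *
        (2 * Real.cos (2 * π * u * a) * (a : ℂ) ^ (w - 2) + (w - 2) * C u (w - 2))) := by
  obtain ⟨hdiff, hrepr⟩ := hC u hu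
  have ha' : (a : ℂ) ≠ 0 := ofReal_ne_zero.2 ha.ne'
  revert w
  refine funext_iff.1 ?_
  refine (analyticOnNhd_univ_iff_differentiable.2 hdiff).eq_of_eventuallyEq
    (analyticOnNhd_univ_iff_differentiable.2 (by fun_prop (disch := exact Or.inl ha')))
    (z₀ := -1) (eventually_of_mem ((isOpen_lt continuous_re continuous_const).mem_nhds
      (show (-1 : ℂ).re < 0 by simp)) fun z (hz : z.re < 0) => ?_)
  have hz2 : (z - 2).re < 0 := by simp only [sub_re, re_ofNat]; linarith
  dsimp only
  rw [hrepr z hz, hrepr (z - 2) hz2, show z - 2 - 1 = z - 3 by ring,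
    integral_Ioi_cos_mul_cpow_eq ha (by positivity) hz]
  ring

theorem norm_ofReal_cpow_le_exp {a : ℝ} (ha : 0 < a) {z : ℂ} {r : ℝ} (hz : ‖z‖ ≤ r) :
    ‖(a : ℂ) ^ z‖ ≤ Real.exp (|Real.log a| * r) := by
  rw [norm_cpow_eq_rpow_re_of_pos ha, rpow_def_of_pos ha, exp_le_exp]
  calc Real.log a * z.re ≤ |Real.log a * z.re| := le_abs_self _
    _ = |Real.log a| * |z.re| := abs_mul _ _
    _ ≤ |Real.log a| * r := by gcongr; exact (abs_re_le_norm z).trans hz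

theorem norm_integral_Ioi_mul_cpow_le {a : ℝ} (ha : 0 < a) {f : ℝ → ℂ} (hf : ∀ t, ‖f t‖ ≤ 1)
    {s : ℂ} (hs : s.re < 0) :
    ‖∫ t in Ioi a, f t * (t : ℂ) ^ (s - 1)‖ ≤ a ^ s.re / -s.re := by
  calc ‖∫ t in Ioi a, f t * (t : ℂ) ^ (s - 1)‖ ≤ ∫ t in Ioi a, t ^ (s.re - 1) := by
        refine norm_integral_le_of_norm_le (integrableOn_Ioi_rpow_of_lt (by linarith) ha)
          (ae_restrict_of_forall_mem measurableSet_Ioi fun t ht => ?_)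
        rw [norm_mul, norm_cpow_eq_rpow_re_of_pos (ha.trans ht), sub_re, one_re]
        exact mul_le_of_le_one_left (rpow_nonneg (ha.trans ht).le _) (hf t)
    _ = a ^ s.re / -s.re := by
        rw [integral_Ioi_rpow_of_lt (by linarith) ha, sub_add_cancel, neg_div, div_neg]

theorem IsCaExtension.norm_le_of_re_le_neg_one {a : ℝ} {C : ℝ → ℂ → ℂ} (hC : IsCaExtension a C)
    (ha : 0 < a) {u : ℝ} (hu : 0 < u) {w : ℂ} (hw : w.re ≤ -1) {r : ℝ} (hwr : ‖w‖ ≤ r) :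
    ‖C u w‖ ≤ 2 * Real.exp (|Real.log a| * r) := by
  rw [(hC u hu).2 w (by linarith), norm_mul, Complex.norm_two]
  gcongr
  calc _ ≤ a ^ w.re / -w.re := norm_integral_Ioi_mul_cpow_le ha
          (fun t => by rw [norm_real, Real.norm_eq_abs]; exact abs_cos_le_one _) (by linarith)
    _ ≤ a ^ w.re := div_le_self (by positivity) (by linarith)
    _ ≤ Real.exp (|Real.log a| * r) := by
        rw [← norm_cpow_eq_rpow_re_of_pos ha]; exact norm_ofReal_cpow_le_exp ha hwr

theorem IsCaExtension.norm_le_div_of_norm_sub_two_le {a : ℝ} {C : ℝ → ℂ → ℂ}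
    (hC : IsCaExtension a C) (ha : 0 < a) {u : ℝ} (hu : 1 ≤ u) {w : ℂ} {B D : ℝ}
    (hw : ‖w‖ ≤ B) (hD : ‖C u (w - 2)‖ ≤ D) :
    ‖C u w‖ ≤ (2 * Real.exp (|Real.log a| * (B + 2)) +
      (B + 1) * (2 * Real.exp (|Real.log a| * (B + 2)) + (B + 2) * D)) / u := by
  have hu0 : 0 < u := by linarith
  have hinv : ‖((2 * π * u : ℝ) : ℂ)⁻¹‖ ≤ u⁻¹ := by
    rw [norm_inv, norm_real, Real.norm_of_nonneg (by positivity)]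
    exact inv_anti₀ hu0 (by nlinarith [pi_gt_three])
  have hinv1 : ‖((2 * π * u : ℝ) : ℂ)⁻¹‖ ≤ 1 := hinv.trans (inv_le_one_of_one_le₀ hu)
  have hterm : ∀ x : ℝ, |x| ≤ 1 → ∀ k : ℂ, ‖k‖ ≤ 2 →
      ‖2 * (x : ℂ) * (a : ℂ) ^ (w - k)‖ ≤ 2 * Real.exp (|Real.log a| * (B + 2)) :=
    fun x hx k hk => by
      simpa using norm_mul_le_of_le (norm_mul_le_of_le Complex.norm_two.le
        (show ‖(x : ℂ)‖ ≤ 1 by simpa using hx))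
        (norm_ofReal_cpow_le_exp ha (norm_sub_le_of_le hw hk))
  rw [hC.apply_eq_recurrence ha hu0 w, ← one_mul (B + 1), ← inv_mul_eq_div]
  refine norm_mul_le_of_le hinv (norm_sub_le_of_le ?_ (norm_mul_le_of_le
    (norm_mul_le_of_le hinv1 (norm_sub_le_of_le hw norm_one.le))
    (norm_add_le_of_le ?_ (norm_mul_le_of_le (norm_sub_le_of_le hw Complex.norm_two.le) hD))))
  · rw [norm_neg]; exact hterm _ (abs_sin_le_one _) 1 (by norm_num)
  · exact hterm _ (abs_cos_le_one _) 2 Complex.norm_two.le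

theorem IsCaExtension.exists_bound_of_re_le {a : ℝ} {C : ℝ → ℂ → ℂ} (hC : IsCaExtension a C)
    (ha : 0 < a) (n : ℕ) {B : ℝ} (hB : 0 ≤ B) :
    ∃ M, 0 ≤ M ∧ ∀ u : ℝ, 1 ≤ u → ∀ w : ℂ, ‖w‖ ≤ B → w.re ≤ 2 * n - 1 → ‖C u w‖ ≤ M := by
  induction n generalizing B with
  | zero =>
    refine ⟨_, by positivity,
      fun u hu w hw hre => hC.norm_le_of_re_le_neg_one ha (by linarith) ?_ hw⟩
    simpa using hre
  | succ n ih =>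
    obtain ⟨D, hD0, hD⟩ := ih (B := B + 2) (by linarith)
    refine ⟨_, ?hM, fun u hu w hw hre => (hC.norm_le_div_of_norm_sub_two_le ha hu hw
      (hD u hu (w - 2) (norm_sub_le_of_le hw Complex.norm_two.le) ?_)).trans (div_le_self ?hM hu)⟩
    case hM => positivity
    push_cast at hre
    simp only [sub_re, re_ofNat]
    linarith

/-- let `a > 0`. For every `R > 0` there is `M > 0` with
`|C_a(u,w)| ≤ M/u` for all `u ≥ 1` and all `w` with `|w| ≤ R`. -/
theorem statement7 (a : ℝ) (ha : 0 < a) (C : ℝ → ℂ → ℂ) (hC : IsCaExtension a C)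
    (R : ℝ) (hR : 0 < R) :
    ∃ M : ℝ, 0 < M ∧ ∀ u : ℝ, 1 ≤ u → ∀ w : ℂ, ‖w‖ ≤ R →
      ‖C u w‖ ≤ M / u := by
  obtain ⟨D, hD0, hD⟩ := hC.exists_bound_of_re_le ha ⌈R⌉₊ (B := R + 2) (by linarith)
  refine ⟨_, by positivity,
    fun u hu w hw => hC.norm_le_div_of_norm_sub_two_le ha hu hw (hD u hu (w - 2)
      (norm_sub_le_of_le hw Complex.norm_two.le) ?_)⟩
  simp only [sub_re, re_ofNat]
  linarith [re_le_norm w, Nat.le_ceil R]
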